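/- arXiv:2204.10660 — 4 statements merged into one kernel-verified Lean document; each statement's English description precedes it below -/
import Mathlib

section
/- If fₙ converges I*-α-uniformly equally to f and gₙ converges I*-α-uniformly equally to g, then max(fₙ, gₙ) converges I*-α-uniformly equally to max(f, g) and min(fₙ, gₙ) converges I*-α-uniformly equally to min(f, g). -/
open Filter

/-- An admissible ideal on ℕ: closed under finite unions and subsets,
and contains all singletons. -/
structure AdmissibleIdeal : Type where
  sets : Set (Set ℕ)
  union_mem : ∀ {A B : Set ℕ}, A ∈ sets → B ∈ sets → A ∪ B ∈ sets
  subset_mem : ∀ {A B : Set ℕ}, A ∈ sets → B ⊆ A → B ∈ sets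
  singleton_mem : ∀ n : ℕ, {n} ∈ sets

/-- The associated filter F(I) = { ℕ \ A : A ∈ I }. -/
def AdmissibleIdeal.dualFilter (I : AdmissibleIdeal) : Set (Set ℕ) :=
  {M | Mᶜ ∈ I.sets}

/-- (xₙ)_{n ∈ M} converges to x. -/
def ConvAlongTo {X : Type*} [MetricSpace X] (M : Set ℕ) (xs : ℕ → X) (x : X) : Prop :=
  ∀ δ > 0, ∃ N : ℕ, ∀ n ≥ N, n ∈ M → dist (xs n) x < δ

/-- (ε, M, n₀) witnesses that |{n ∈ M : |fₙ(xₙ) − g(x)| ≥ εₙ}| ≤ n₀ for every x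
and every sequence (xₙ)_{n∈M} → x. -/
def WitnessUE {X : Type*} [MetricSpace X]
    (f : ℕ → X → ℝ) (g : X → ℝ) (ε : ℕ → ℝ) (M : Set ℕ) (n₀ : ℕ) : Prop :=
  ∀ x : X, ∀ xs : ℕ → X, ConvAlongTo M xs x →
    ({n | n ∈ M ∧ ε n ≤ |f n (xs n) - g x|}).encard ≤ (n₀ : ℕ∞)

/-- I*-α-uniform equal convergence. -/
def IStarAlphaUE (I : AdmissibleIdeal) {X : Type*} [MetricSpace X]
    (f : ℕ → X → ℝ) (g : X → ℝ) : Prop :=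
  ∃ ε : ℕ → ℝ, (∀ n, 0 < ε n) ∧ Tendsto ε atTop (nhds 0) ∧
    ∃ M ∈ I.dualFilter, ∃ n₀ : ℕ, WitnessUE f g ε M n₀

/-- I*-α-strong uniform equal convergence. -/
def IStarAlphaSUE (I : AdmissibleIdeal) {X : Type*} [MetricSpace X]
    (f : ℕ → X → ℝ) (g : X → ℝ) : Prop :=
  ∃ ε : ℕ → ℝ, (∀ n, 0 < ε n) ∧ Summable ε ∧
    ∃ M ∈ I.dualFilter, ∃ n₀ : ℕ, WitnessUE f g ε M n₀

/-!
Max and min are 1-Lipschitz for the metric `|a - c| + |b - d|` on `ℝ × ℝ`. Take `ε = εf + εg` and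
`M = Mf ∩ Mg`: an index where the combined sequence misses by at least `εf n + εg n` is one where `f`
misses by `εf n` or `g` misses by `εg n`, so there are at most `nf + ng` of them.
-/

lemma abs_max_sub_max_le_abs_add_abs {α : Type*} [AddCommGroup α] [LinearOrder α]
    [IsOrderedAddMonoid α] (a b c d : α) : |max a b - max c d| ≤ |a - c| + |b - d| :=
  (abs_max_sub_max_le_max a b c d).trans (max_le_add_of_nonneg (abs_nonneg _) (abs_nonneg _))

lemma abs_min_sub_min_le_abs_add_abs {α : Type*} [AddCommGroup α] [LinearOrder α]
    [IsOrderedAddMonoid α] (a b c d : α) : |min a b - min c d| ≤ |a - c| + |b - d| :=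
  (abs_min_sub_min_le_max a b c d).trans (max_le_add_of_nonneg (abs_nonneg _) (abs_nonneg _))

lemma AdmissibleIdeal.inter_mem_dualFilter (I : AdmissibleIdeal) {M₁ M₂ : Set ℕ}
    (h₁ : M₁ ∈ I.dualFilter) (h₂ : M₂ ∈ I.dualFilter) : M₁ ∩ M₂ ∈ I.dualFilter := by
  show (M₁ ∩ M₂)ᶜ ∈ I.sets
  rw [Set.compl_inter]
  exact I.union_mem h₁ h₂

lemma ConvAlongTo.exists_eqOn_convAlongTo {X : Type*} [MetricSpace X] {M : Set ℕ}
    {xs : ℕ → X} {x : X} (h : ConvAlongTo M xs x) :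
    ∃ ys : ℕ → X, Set.EqOn ys xs M ∧ ∀ M', ConvAlongTo M' ys x := by
  classical
  refine ⟨M.piecewise xs fun _ => x, M.piecewise_eqOn _ _, fun _ δ hδ => ?_⟩
  obtain ⟨N, hN⟩ := h δ hδ
  refine ⟨N, fun n hn _ => ?_⟩
  by_cases hnM : n ∈ M
  · rw [Set.piecewise_eq_of_mem _ _ _ hnM]
    exact hN n hn hnM
  · rw [Set.piecewise_eq_of_notMem _ _ _ hnM, dist_self]
    exact hδ

section Combination

variable {X : Type*} [MetricSpace X] {f g : ℕ → X → ℝ} {F G : X → ℝ} (φ : ℝ → ℝ → ℝ)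

lemma WitnessUE.comp₂ (hφ : ∀ a b c d, |φ a b - φ c d| ≤ |a - c| + |b - d|)
    {εf εg : ℕ → ℝ} {Mf Mg : Set ℕ} {nf ng : ℕ}
    (hf : WitnessUE f F εf Mf nf) (hg : WitnessUE g G εg Mg ng) :
    WitnessUE (fun n x => φ (f n x) (g n x)) (fun x => φ (F x) (G x)) (εf + εg) (Mf ∩ Mg)
      (nf + ng) := by
  intro x xs hxs
  -- `xs` converges only along `Mf ∩ Mg`, while `hf` and `hg` need convergence along `Mf`, `Mg`.
  obtain ⟨ys, hys, hys_conv⟩ := hxs.exists_eqOn_convAlongTo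
  have hsub : {n | n ∈ Mf ∩ Mg ∧ (εf + εg) n ≤ |φ (f n (xs n)) (g n (xs n)) - φ (F x) (G x)|} ⊆
      {n | n ∈ Mf ∧ εf n ≤ |f n (ys n) - F x|} ∪ {n | n ∈ Mg ∧ εg n ≤ |g n (ys n) - G x|} := by
    rintro n ⟨hn, hmiss⟩
    rw [Pi.add_apply, ← hys hn] at hmiss
    rcases le_or_gt (εf n) |f n (ys n) - F x| with hfn | hfn
    · exact Or.inl ⟨hn.1, hfn⟩
    · exact Or.inr ⟨hn.2, by linarith [hφ (f n (ys n)) (g n (ys n)) (F x) (G x)]⟩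
  calc _ ≤ _ := Set.encard_le_encard hsub
    _ ≤ _ := Set.encard_union_le _ _
    _ ≤ nf + ng := add_le_add (hf x ys (hys_conv Mf)) (hg x ys (hys_conv Mg))
    _ = ↑(nf + ng) := (Nat.cast_add nf ng).symm

lemma IStarAlphaUE.comp₂ {I : AdmissibleIdeal}
    (hφ : ∀ a b c d, |φ a b - φ c d| ≤ |a - c| + |b - d|)
    (hf : IStarAlphaUE I f F) (hg : IStarAlphaUE I g G) :
    IStarAlphaUE I (fun n x => φ (f n x) (g n x)) (fun x => φ (F x) (G x)) := by
  obtain ⟨εf, hεf_pos, hεf_lim, Mf, hMf, nf, hwf⟩ := hf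
  obtain ⟨εg, hεg_pos, hεg_lim, Mg, hMg, ng, hwg⟩ := hg
  exact ⟨εf + εg, fun n => add_pos (hεf_pos n) (hεg_pos n), add_zero (0 : ℝ) ▸ hεf_lim.add hεg_lim,
    Mf ∩ Mg, I.inter_mem_dualFilter hMf hMg, nf + ng, hwf.comp₂ φ hφ hwg⟩

end Combination

theorem ue_max_min (I : AdmissibleIdeal) {X : Type*} [MetricSpace X]
    (f g : ℕ → X → ℝ) (F G : X → ℝ)
    (hf : IStarAlphaUE I f F) (hg : IStarAlphaUE I g G) :
    IStarAlphaUE I (fun n x => max (f n x) (g n x)) (fun x => max (F x) (G x)) ∧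
    IStarAlphaUE I (fun n x => min (f n x) (g n x)) (fun x => min (F x) (G x)) :=
  ⟨hf.comp₂ max abs_max_sub_max_le_abs_add_abs hg, hf.comp₂ min abs_min_sub_min_le_abs_add_abs hg⟩
end

section
/- If fₙ converges I*-α-strongly uniformly equally to f, then |fₙ| converges I*-α-strongly uniformly equally to |f|. -/
open Filter

section

variable {X : Type*} [MetricSpace X] {f f' : ℕ → X → ℝ} {g g' : X → ℝ}

theorem WitnessUE.mono {ε : ℕ → ℝ} {M : Set ℕ} {n₀ : ℕ}
    (hle : ∀ n y x, |f' n y - g' x| ≤ |f n y - g x|) (hW : WitnessUE f g ε M n₀) :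
    WitnessUE f' g' ε M n₀ := by
  intro x xs hconv
  refine (Set.encard_mono ?_).trans (hW x xs hconv)
  exact fun n ⟨hn, hε⟩ => ⟨hn, hε.trans (hle n (xs n) x)⟩

theorem IStarAlphaSUE.mono {I : AdmissibleIdeal}
    (hle : ∀ n y x, |f' n y - g' x| ≤ |f n y - g x|) (h : IStarAlphaSUE I f g) :
    IStarAlphaSUE I f' g' :=
  let ⟨ε, hpos, hsum, M, hM, n₀, hW⟩ := h
  ⟨ε, hpos, hsum, M, hM, n₀, hW.mono hle⟩

end

theorem sue_abs (I : AdmissibleIdeal) {X : Type*} [MetricSpace X]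
    (f : ℕ → X → ℝ) (F : X → ℝ)
    (hf : IStarAlphaSUE I f F) :
    IStarAlphaSUE I (fun n x => |f n x|) (fun x => |F x|) :=
  hf.mono fun _ _ _ => abs_abs_sub_abs_le_abs_sub _ _
end

section
/- Let Φ be a lattice of real-valued functions on X. Then the class Φ^{I*-α-s.u.e.} of all I*-α-strong uniform equal limits of sequences from Φ is also a lattice. -/
/-!
Max and min are 1-Lipschitz for the sup-distance on `ℝ × ℝ`, so if `fₙ → f` and `gₙ → g`
with error bounds `εₙ`, `ε'ₙ` outside at most `n₀`, `n₀'` indices of `M`, `M'`, then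
`fₙ ⊔ gₙ → f ⊔ g` (and likewise for `⊓`) with error bounds `εₙ + ε'ₙ` outside at most
`n₀ + n₀'` indices of `M ∩ M'`. Constants are limits of constant sequences.
-/

open Filter

/-- Φ is a lattice of functions: contains all constants and is closed under
pointwise max and min. -/
def IsFnLattice {X : Type*} (Phi : Set (X → ℝ)) : Prop :=
  (∀ c : ℝ, (fun _ => c) ∈ Phi) ∧
  (∀ f ∈ Phi, ∀ g ∈ Phi, (fun x => max (f x) (g x)) ∈ Phi ∧ (fun x => min (f x) (g x)) ∈ Phi)

/-- The class of all I*-α-strong uniform equal limits of sequences from Φ. -/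
def sueClosure (I : AdmissibleIdeal) {X : Type*} [MetricSpace X]
    (Phi : Set (X → ℝ)) : Set (X → ℝ) :=
  {f | ∃ fs : ℕ → (X → ℝ), (∀ n, fs n ∈ Phi) ∧ IStarAlphaSUE I fs f}

namespace AdmissibleIdeal

variable (I : AdmissibleIdeal)

lemma univ_mem_dualFilter : Set.univ ∈ I.dualFilter := by
  simpa [dualFilter] using I.subset_mem (I.singleton_mem 0) (Set.empty_subset _)

lemma inter_mem_dualFilter_s13 {M M' : Set ℕ} (hM : M ∈ I.dualFilter) (hM' : M' ∈ I.dualFilter) :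
    M ∩ M' ∈ I.dualFilter := by
  simpa [dualFilter, Set.compl_inter] using I.union_mem hM hM'

end AdmissibleIdeal

section

variable {X : Type*} [MetricSpace X]

lemma ConvAlongTo.piecewise_const {S : Set ℕ} [DecidablePred (· ∈ S)] {xs : ℕ → X} {x : X}
    (h : ConvAlongTo S xs x) (T : Set ℕ) : ConvAlongTo T (S.piecewise xs fun _ => x) x := by
  intro δ hδ
  obtain ⟨N, hN⟩ := h δ hδ
  refine ⟨N, fun n hn _ => ?_⟩
  by_cases hS : n ∈ S
  · simpa [Set.piecewise_eq_of_mem _ _ _ hS] using hN n hn hS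
  · simpa [Set.piecewise_eq_of_notMem _ _ _ hS] using hδ

/-- Apply the witness to the sequence redefined to be `x` off `S`, which converges along `M`. -/
lemma WitnessUE.encard_inter_le {f : ℕ → X → ℝ} {g : X → ℝ} {ε : ℕ → ℝ} {M S : Set ℕ}
    {n₀ : ℕ} (hw : WitnessUE f g ε M n₀) {xs : ℕ → X} {x : X} (hS : ConvAlongTo S xs x) :
    {n | n ∈ M ∩ S ∧ ε n ≤ |f n (xs n) - g x|}.encard ≤ n₀ := by
  classical
  refine le_trans (Set.encard_le_encard ?_) (hw x _ (hS.piecewise_const M))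
  rintro n ⟨⟨hM, hnS⟩, hn⟩
  exact ⟨hM, by rwa [Set.piecewise_eq_of_mem _ _ _ hnS]⟩

lemma iStarAlphaSUE_const (I : AdmissibleIdeal) (c : ℝ) :
    IStarAlphaSUE I (fun _ (_ : X) => c) (fun _ => c) := by
  refine ⟨fun n => (1 / 2 : ℝ) ^ n, fun n => by positivity, summable_geometric_two,
    Set.univ, I.univ_mem_dualFilter, 0, fun x xs _ => ?_⟩
  have hnone : {n : ℕ | n ∈ Set.univ ∧ (1 / 2 : ℝ) ^ n ≤ |c - c|} = ∅ :=
    Set.eq_empty_of_forall_notMem fun n ⟨_, hn⟩ => by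
      rw [sub_self, abs_zero] at hn
      exact (pow_pos (by norm_num) n).not_ge hn
  rw [hnone, Set.encard_empty]
  exact bot_le

lemma const_mem_sueClosure (I : AdmissibleIdeal) {Phi : Set (X → ℝ)}
    (hPhi : ∀ c : ℝ, (fun _ => c) ∈ Phi) (c : ℝ) : (fun _ => c) ∈ sueClosure I Phi :=
  ⟨fun _ _ => c, fun _ => hPhi c, iStarAlphaSUE_const I c⟩

variable (op : ℝ → ℝ → ℝ) (hop : ∀ a b c d, |op a b - op c d| ≤ max |a - c| |b - d|)
include hop

lemma WitnessUE.map₂ {f f' : ℕ → X → ℝ} {g g' : X → ℝ} {ε ε' : ℕ → ℝ} {M M' : Set ℕ}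
    {n₀ n₀' : ℕ} (hε : ∀ n, 0 ≤ ε n) (hε' : ∀ n, 0 ≤ ε' n)
    (hw : WitnessUE f g ε M n₀) (hw' : WitnessUE f' g' ε' M' n₀') :
    WitnessUE (fun n y => op (f n y) (f' n y)) (fun y => op (g y) (g' y)) (ε + ε') (M ∩ M')
      (n₀ + n₀') := by
  intro x xs hconv
  have hbad : {n | n ∈ M ∩ M' ∧ (ε + ε') n ≤ |op (f n (xs n)) (f' n (xs n)) - op (g x) (g' x)|}
      ⊆ {n | n ∈ M ∩ (M ∩ M') ∧ ε n ≤ |f n (xs n) - g x|} ∪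
        {n | n ∈ M' ∩ (M ∩ M') ∧ ε' n ≤ |f' n (xs n) - g' x|} := by
    rintro n ⟨hn, hle⟩
    rw [Pi.add_apply] at hle
    rcases le_max_iff.mp (hle.trans (hop _ _ _ _)) with h | h
    · exact Or.inl ⟨⟨hn.1, hn⟩, by linarith [hε' n]⟩
    · exact Or.inr ⟨⟨hn.2, hn⟩, by linarith [hε n]⟩
  calc _ ≤ _ := Set.encard_le_encard hbad
    _ ≤ _ := Set.encard_union_le _ _
    _ ≤ n₀ + n₀' := add_le_add (hw.encard_inter_le hconv) (hw'.encard_inter_le hconv)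
    _ = _ := by push_cast; rfl

lemma IStarAlphaSUE.map₂ {I : AdmissibleIdeal} {f f' : ℕ → X → ℝ} {g g' : X → ℝ}
    (h : IStarAlphaSUE I f g) (h' : IStarAlphaSUE I f' g') :
    IStarAlphaSUE I (fun n y => op (f n y) (f' n y)) (fun y => op (g y) (g' y)) := by
  obtain ⟨ε, hε, hsum, M, hM, n₀, hw⟩ := h
  obtain ⟨ε', hε', hsum', M', hM', n₀', hw'⟩ := h'
  exact ⟨ε + ε', fun n => add_pos (hε n) (hε' n), hsum.add hsum', M ∩ M',
    I.inter_mem_dualFilter_s13 hM hM', n₀ + n₀',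
    hw.map₂ op hop (fun n => (hε n).le) (fun n => (hε' n).le) hw'⟩

lemma map₂_mem_sueClosure {I : AdmissibleIdeal} {Phi : Set (X → ℝ)}
    (hPhi : ∀ φ ∈ Phi, ∀ ψ ∈ Phi, (fun y => op (φ y) (ψ y)) ∈ Phi)
    {g g' : X → ℝ} (hg : g ∈ sueClosure I Phi) (hg' : g' ∈ sueClosure I Phi) :
    (fun y => op (g y) (g' y)) ∈ sueClosure I Phi := by
  obtain ⟨f, hf, h⟩ := hg
  obtain ⟨f', hf', h'⟩ := hg'
  exact ⟨fun n y => op (f n y) (f' n y), fun n => hPhi _ (hf n) _ (hf' n), h.map₂ op hop h'⟩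

end

theorem sueClosure_lattice (I : AdmissibleIdeal) {X : Type*} [MetricSpace X]
    (Phi : Set (X → ℝ)) (hPhi : IsFnLattice Phi) :
    IsFnLattice (sueClosure I Phi) := by
  obtain ⟨hconst, hmaxmin⟩ := hPhi
  refine ⟨const_mem_sueClosure I hconst, fun g hg g' hg' => ⟨?_, ?_⟩⟩
  · exact map₂_mem_sueClosure max abs_max_sub_max_le_max
      (fun φ hφ ψ hψ => (hmaxmin φ hφ ψ hψ).1) hg hg'
  · exact map₂_mem_sueClosure min abs_min_sub_min_le_max
      (fun φ hφ ψ hψ => (hmaxmin φ hφ ψ hψ).2) hg hg'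
end

section
/- Let h : X → Y be a uniform homeomorphism, F = (fₙ) self-maps of X and G = (gₙ) self-maps of Y uniformly h-conjugate, and f : X → X, g : Y → Y with g ∘ h = h ∘ f. If (fₙ) I-α-converges to f at every point of X, then (gₙ) I-α-converges to g at every point of Y. -/
open Filter

/-- I-convergence of a sequence in a metric space. -/
def IConv (I : AdmissibleIdeal) {X : Type*} [MetricSpace X] (x : ℕ → X) (a : X) : Prop :=
  ∀ ε > 0, {n : ℕ | ε ≤ dist (x n) a} ∈ I.sets

/-- (fₙ) I-α-converges to F at x₀. -/
def IAlphaConvAt (I : AdmissibleIdeal) {X : Type*} [MetricSpace X]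
    (f : ℕ → X → X) (F : X → X) (x₀ : X) : Prop :=
  ∀ xs : ℕ → X, IConv I xs x₀ → IConv I (fun n => f n (xs n)) (F x₀)

theorem IConv.comp_continuousAt {I : AdmissibleIdeal} {X Y : Type*} [MetricSpace X]
    [MetricSpace Y] {u : X → Y} {xs : ℕ → X} {a : X} (hu : ContinuousAt u a)
    (hx : IConv I xs a) : IConv I (fun n => u (xs n)) (u a) := by
  intro ε hε
  obtain ⟨δ, hδ, hclose⟩ := Metric.continuousAt_iff.mp hu ε hε
  refine I.subset_mem (hx δ hδ) fun n hn => ?_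
  by_contra hfar
  exact (not_lt.mpr hn) (hclose (not_le.mp hfar))

theorem IAlphaConvAt.of_conj {I : AdmissibleIdeal} {X Y : Type*} [MetricSpace X]
    [MetricSpace Y] {f : ℕ → X → X} {g : ℕ → Y → Y} {F : X → X} {G : Y → Y} {x : X}
    (h : X ≃ₜ Y) (hconj : ∀ n x, g n (h x) = h (f n x)) (hconjFG : G (h x) = h (F x))
    (hf : IAlphaConvAt I f F x) : IAlphaConvAt I g G (h x) := by
  intro ys hys
  have hpull : IConv I (fun n => h.symm (ys n)) x := by
    simpa using IConv.comp_continuousAt h.symm.continuous.continuousAt hys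
  have hpush := IConv.comp_continuousAt h.continuous.continuousAt (hf _ hpull)
  simpa only [← hconj, h.apply_symm_apply, hconjFG] using hpush

theorem ialpha_of_conjugate (I : AdmissibleIdeal)
    {X Y : Type*} [MetricSpace X] [MetricSpace Y]
    (h : X ≃ Y) (huc : UniformContinuous (h : X → Y))
    (huc' : UniformContinuous (h.symm : Y → X))
    (f : ℕ → X → X) (g : ℕ → Y → Y) (F : X → X) (G : Y → Y)
    (hconj : ∀ n : ℕ, ∀ x : X, g n (h x) = h (f n x))
    (hconjFG : ∀ x : X, G (h x) = h (F x))
    (halpha : ∀ x : X, IAlphaConvAt I f F x) :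
    ∀ y : Y, IAlphaConvAt I g G y := by
  let e : X ≃ₜ Y := ⟨h, huc.continuous, huc'.continuous⟩
  intro y
  rw [← h.apply_symm_apply y]
  exact IAlphaConvAt.of_conj e hconj (hconjFG _) (halpha _)
end
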